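/- Let s < 1/2 and 2 ≤ p < (1/2 - s)^{-1}. There is a constant C > 0 independent of N such that for every X = (X_t)_{t=1}^N ∈ ℝ^N with discrete sine expansion X_t = ∑_{k=1}^N x_k sin(kπt/(N+1)), one has (∑_{t=1}^N |X_t|^p / (N+1))^{1/p} ≤ C (∑_{k=1}^N k^{2s} x_k²)^{1/2}. -/

import Mathlib

/-!
Split the frequencies into dyadic blocks `2 ^ j ≤ k < 2 ^ (j + 1)`. On one block the sum
`Y_t = ∑ x_k sin (kπt/(N+1))` is bounded pointwise by `√(#block) · ‖x‖₂`, while orthogonality of the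
sine modes gives `∑_t Y_t ^ 2 / (N + 1) = ‖x‖₂ ^ 2 / 2`; interpolating between the two yields the
normalized `ℓ^p` bound `2 ^ (j (1/2 - 1/p)) ‖x‖₂ = 2 ^ (-j ε) · 2 ^ (j s) ‖x‖₂` with
`ε = s + 1/p - 1/2 > 0`. The factor `2 ^ (j s)` is absorbed by the weight `k ^ (2 s)`, and the
geometric decay `2 ^ (-j ε)` lets Minkowski's inequality and Cauchy–Schwarz sum the blocks.
-/

open Real Finset

theorem sum_range_cos_succ_mul {θ : ℝ} (hθ : sin (θ / 2) ≠ 0) (N : ℕ) :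
    ∑ t ∈ range N, cos ((t + 1) * θ) =
      (sin ((N + 1 / 2) * θ) - sin (θ / 2)) / (2 * sin (θ / 2)) := by
  rw [eq_div_iff (mul_ne_zero two_ne_zero hθ), sum_mul]
  have htel : ∀ t : ℕ, cos ((t + 1) * θ) * (2 * sin (θ / 2)) =
      sin (((t + 1 : ℕ) + 1 / 2) * θ) - sin ((t + 1 / 2) * θ) := by
    intro t
    have hnext : ((t + 1 : ℕ) + 1 / 2) * θ = (t + 1) * θ + θ / 2 := by push_cast; ring
    have hprev : (t + 1 / 2) * θ = (t + 1) * θ - θ / 2 := by ring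
    rw [hnext, hprev, sin_add, sin_sub]
    ring
  simp_rw [htel]
  rw [sum_range_sub (fun t : ℕ => sin ((t + 1 / 2) * θ)), Nat.cast_zero, zero_add,
    one_div_mul_eq_div]

theorem sum_range_cos_int_mul_pi_div (N : ℕ) {m : ℤ} (hm : ¬ 2 * ((N : ℤ) + 1) ∣ m) :
    ∑ t ∈ range N, cos (m * π * (t + 1) / (N + 1)) = -(1 + cos (m * π)) / 2 := by
  set θ : ℝ := m * π / (N + 1) with hθ
  have hsin : sin (θ / 2) ≠ 0 := by
    rw [Ne, sin_eq_zero_iff]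
    rintro ⟨n, hn⟩
    refine hm ⟨n, ?_⟩
    rw [hθ] at hn
    field_simp at hn
    exact_mod_cast (by linarith [hn] : (m : ℝ) = 2 * ((N : ℝ) + 1) * n)
  have hend : sin ((N + 1 / 2) * θ) = -cos (m * π) * sin (θ / 2) := by
    have : (N + 1 / 2) * θ = m * π - θ / 2 := by rw [hθ]; field_simp; ring
    rw [this, sin_sub, sin_int_mul_pi]
    ring
  have hterm : ∀ t : ℕ, cos (m * π * (t + 1) / (N + 1)) = cos ((t + 1) * θ) := by
    intro t; rw [hθ]; ring_nf
  simp_rw [hterm]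
  rw [sum_range_cos_succ_mul hsin, hend]
  field_simp
  ring

/-- Indices are 0-based: `sineMode N (k - 1) (t - 1)` is the paper's `sin (kπt/(N+1))`. -/
noncomputable def sineMode (N k t : ℕ) : ℝ := sin ((k + 1) * π * (t + 1) / (N + 1))

theorem sum_sineMode_mul_sineMode {N k l : ℕ} (hk : k < N) (hl : l < N) :
    ∑ t ∈ range N, sineMode N k t * sineMode N l t = if k = l then ((N : ℝ) + 1) / 2 else 0 := by
  have hdvd : ∀ m : ℤ, m ≠ 0 → |m| < 2 * ((N : ℤ) + 1) → ¬ 2 * ((N : ℤ) + 1) ∣ m :=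
    fun m hm0 hlt hdvd => hm0 (Int.eq_zero_of_abs_lt_dvd hdvd hlt)
  have hprod : ∀ t : ℕ, sineMode N k t * sineMode N l t =
      (cos (((k - l : ℤ) : ℝ) * π * (t + 1) / (N + 1)) -
        cos (((k + l + 2 : ℤ) : ℝ) * π * (t + 1) / (N + 1))) / 2 := by
    intro t
    set a : ℝ := (k + 1) * π * (t + 1) / (N + 1)
    set b : ℝ := (l + 1) * π * (t + 1) / (N + 1)
    have hsub : ((k - l : ℤ) : ℝ) * π * (t + 1) / (N + 1) = a - b := by push_cast; ring
    have hadd : ((k + l + 2 : ℤ) : ℝ) * π * (t + 1) / (N + 1) = a + b := by push_cast; ring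
    rw [sineMode, sineMode, hsub, hadd, cos_sub, cos_add]
    ring
  simp_rw [hprod, ← sum_div, sum_sub_distrib]
  rw [sum_range_cos_int_mul_pi_div N (m := k + l + 2)
    (hdvd _ (by omega) (abs_lt.2 ⟨by omega, by omega⟩))]
  split_ifs with hkl
  · subst hkl
    have hperiod : ((k + k + 2 : ℤ) : ℝ) * π = 0 + ((k + 1 : ℤ) : ℝ) * (2 * π) := by
      push_cast; ring
    simp only [sub_self, Int.cast_zero, zero_mul, zero_div, cos_zero, sum_const, card_range,
      nsmul_eq_mul, mul_one, hperiod, cos_add_int_mul_two_pi]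
    ring
  · rw [sum_range_cos_int_mul_pi_div N (m := k - l)
      (hdvd _ (by omega) (abs_lt.2 ⟨by omega, by omega⟩))]
    have hperiod :
        ((k + l + 2 : ℤ) : ℝ) * π = ((k - l : ℤ) : ℝ) * π + ((l + 1 : ℤ) : ℝ) * (2 * π) := by
      push_cast; ring
    rw [hperiod, cos_add_int_mul_two_pi]
    ring

theorem sum_sq_sum_mul_of_orthogonal {ι κ : Type*} [DecidableEq κ] (T : Finset ι) (B : Finset κ)
    (F : κ → ι → ℝ) {c : ℝ}
    (horth : ∀ k ∈ B, ∀ l ∈ B, ∑ t ∈ T, F k t * F l t = if k = l then c else 0) (x : κ → ℝ) :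
    ∑ t ∈ T, (∑ k ∈ B, x k * F k t) ^ 2 = c * ∑ k ∈ B, x k ^ 2 := by
  calc ∑ t ∈ T, (∑ k ∈ B, x k * F k t) ^ 2
      = ∑ k ∈ B, ∑ l ∈ B, x k * x l * ∑ t ∈ T, F k t * F l t := by
        simp_rw [sq, sum_mul_sum, mul_sum]
        rw [sum_comm]
        refine sum_congr rfl fun k _ => ?_
        rw [sum_comm]
        exact sum_congr rfl fun l _ => sum_congr rfl fun t _ => by ring
    _ = ∑ k ∈ B, c * x k ^ 2 := sum_congr rfl fun k hk => by
        rw [sum_congr rfl fun l hl => by rw [horth k hk l hl]]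
        simp only [mul_ite, mul_zero, sum_ite_eq, if_pos hk]
        ring
    _ = c * ∑ k ∈ B, x k ^ 2 := (mul_sum _ _ _).symm

theorem sum_sq_sum_sineMode (N : ℕ) (B : Finset (Fin N)) (x : Fin N → ℝ) :
    ∑ t : Fin N, (∑ k ∈ B, x k * sineMode N k t) ^ 2 = ((N : ℝ) + 1) / 2 * ∑ k ∈ B, x k ^ 2 :=
  sum_sq_sum_mul_of_orthogonal _ _ _ (fun k _ l _ => by
    rw [Fin.sum_univ_eq_sum_range (fun t => sineMode N k t * sineMode N l t),
      sum_sineMode_mul_sineMode k.2 l.2]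
    simp only [Fin.val_inj]) x

theorem abs_sum_mul_le_sqrt_card_mul_sqrt {κ : Type*} (B : Finset κ) (x c : κ → ℝ)
    (hc : ∀ k ∈ B, |c k| ≤ 1) : |∑ k ∈ B, x k * c k| ≤ √(#B) * √(∑ k ∈ B, x k ^ 2) :=
  calc |∑ k ∈ B, x k * c k| ≤ ∑ k ∈ B, |x k| * 1 :=
        (abs_sum_le_sum_abs _ _).trans <| sum_le_sum fun k hk => by
          rw [abs_mul]; exact mul_le_mul_of_nonneg_left (hc k hk) (abs_nonneg _)
    _ ≤ √(∑ k ∈ B, |x k| ^ 2) * √(∑ k ∈ B, (1 : ℝ) ^ 2) := sum_mul_le_sqrt_mul_sqrt _ _ _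
    _ = √(#B) * √(∑ k ∈ B, x k ^ 2) := by simp [sq_abs, mul_comm]

theorem sum_abs_rpow_le_rpow_mul_sum_sq {ι : Type*} (T : Finset ι) (f : ι → ℝ) {p M : ℝ}
    (hp : 2 ≤ p) (hM : ∀ t ∈ T, |f t| ≤ M) :
    ∑ t ∈ T, |f t| ^ p ≤ M ^ (p - 2) * ∑ t ∈ T, f t ^ 2 := by
  rw [mul_sum]
  refine sum_le_sum fun t ht => ?_
  calc |f t| ^ p = |f t| ^ (p - 2) * |f t| ^ (2 : ℝ) := by
        rw [← rpow_add' (abs_nonneg _) (by linarith), sub_add_cancel]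
    _ ≤ M ^ (p - 2) * f t ^ 2 := by
        rw [rpow_two, sq_abs]
        exact mul_le_mul_of_nonneg_right
          (rpow_le_rpow (abs_nonneg _) (hM t ht) (by linarith)) (sq_nonneg _)

theorem rpow_sum_abs_sum_sineMode_le (N : ℕ) (B : Finset (Fin N)) (x : Fin N → ℝ) {p : ℝ}
    (hp : 2 ≤ p) :
    (∑ t : Fin N, |∑ k ∈ B, x k * sineMode N k t| ^ p / (N + 1)) ^ (1 / p) ≤
      (#B : ℝ) ^ (1 / 2 - 1 / p) * √(∑ k ∈ B, x k ^ 2) := by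
  set S := ∑ k ∈ B, x k ^ 2
  have hS : 0 ≤ S := sum_nonneg fun k _ => sq_nonneg _
  have hN : (0 : ℝ) < N + 1 := by positivity
  have hsup : ∀ t ∈ univ, |∑ k ∈ B, x k * sineMode N k (t : Fin N)| ≤ √(#B) * √S :=
    fun t _ => abs_sum_mul_le_sqrt_card_mul_sqrt _ _ _ fun k _ => abs_sin_le_one _
  have hsum : ∑ t : Fin N, |∑ k ∈ B, x k * sineMode N k t| ^ p / (N + 1) ≤
      (√(#B) * √S) ^ (p - 2) * √S ^ (2 : ℝ) :=
    calc ∑ t : Fin N, |∑ k ∈ B, x k * sineMode N k t| ^ p / (N + 1)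
        ≤ (√(#B) * √S) ^ (p - 2) * (((N : ℝ) + 1) / 2 * S) / (N + 1) := by
          rw [← sum_div, ← sum_sq_sum_sineMode]
          gcongr
          exact sum_abs_rpow_le_rpow_mul_sum_sq _ _ hp hsup
      _ ≤ (√(#B) * √S) ^ (p - 2) * √S ^ (2 : ℝ) := by
          rw [rpow_two, sq_sqrt hS, mul_div_assoc]
          gcongr
          rw [div_le_iff₀ hN]
          nlinarith
  rw [one_div p, rpow_inv_le_iff_of_pos (by positivity) (by positivity) (by linarith)]
  refine hsum.trans_eq ?_
  rw [mul_rpow (sqrt_nonneg _) (sqrt_nonneg _), mul_assoc,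
    ← rpow_add' (sqrt_nonneg _) (by linarith), mul_rpow (by positivity) (sqrt_nonneg _),
    ← rpow_mul (Nat.cast_nonneg _), sqrt_eq_rpow (#B : ℝ), ← rpow_mul (Nat.cast_nonneg _)]
  congr 2
  · field_simp
  · ring

theorem rpow_le_max_one_mul_rpow {a b : ℝ} (ha : 0 < a) (hab : a ≤ b) (hb : b ≤ 2 * a) (r : ℝ) :
    a ^ r ≤ max 1 (2 ^ (-r)) * b ^ r := by
  rcases le_total 0 r with hr | hr
  · exact (rpow_le_rpow ha.le hab hr).trans
      (le_mul_of_one_le_left (rpow_nonneg (ha.le.trans hab) _) (le_max_left _ _))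
  · calc a ^ r = 2 ^ (-r) * (2 * a) ^ r := by
          rw [mul_rpow zero_le_two ha.le, ← mul_assoc, ← rpow_add zero_lt_two, neg_add_cancel,
            rpow_zero, one_mul]
      _ ≤ max 1 (2 ^ (-r)) * b ^ r := mul_le_mul (le_max_right _ _)
          (rpow_le_rpow_of_nonpos (ha.trans_le hab) hb hr) (by positivity) (by positivity)

def dyadicBlock (N j : ℕ) : Finset (Fin N) := {k | Nat.log 2 (k + 1) = j}

theorem pow_le_of_mem_dyadicBlock {N j : ℕ} {k : Fin N} (hk : k ∈ dyadicBlock N j) :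
    2 ^ j ≤ (k : ℕ) + 1 ∧ (k : ℕ) + 1 < 2 ^ (j + 1) := by
  obtain rfl : Nat.log 2 (k + 1) = j := (mem_filter.1 hk).2
  exact ⟨Nat.pow_log_le_self 2 k.val.succ_ne_zero, Nat.lt_pow_succ_log_self one_lt_two _⟩

theorem card_dyadicBlock_le (N j : ℕ) : #(dyadicBlock N j) ≤ 2 ^ j := by
  calc #(dyadicBlock N j) ≤ #(Ico (2 ^ j) (2 ^ (j + 1))) :=
        card_le_card_of_injOn (fun k => (k : ℕ) + 1)
          (fun k hk => mem_Ico.2 (pow_le_of_mem_dyadicBlock hk))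
          (fun k _ l _ h => Fin.ext (Nat.succ_injective h))
    _ = 2 ^ j := by rw [Nat.card_Ico, pow_succ]; omega

theorem sum_range_sum_dyadicBlock {M : Type*} [AddCommMonoid M] (N : ℕ) (f : Fin N → M) :
    ∑ j ∈ range N, ∑ k ∈ dyadicBlock N j, f k = ∑ k, f k := by
  refine sum_fiberwise_of_maps_to (fun k _ => mem_range.2 ?_) f
  calc Nat.log 2 (k + 1) < k + 1 := Nat.log_lt_self 2 k.val.succ_ne_zero
    _ ≤ N := k.2

theorem rpow_sum_abs_sum_le {ι κ : Type*} (T : Finset ι) (u : Finset κ) (F : κ → ι → ℝ)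
    {p : ℝ} (hp : 1 ≤ p) :
    (∑ t ∈ T, |∑ j ∈ u, F j t| ^ p) ^ (1 / p) ≤ ∑ j ∈ u, (∑ t ∈ T, |F j t| ^ p) ^ (1 / p) := by
  classical
  induction u using Finset.induction_on with
  | empty =>
    have hp0 : p ≠ 0 := by linarith
    simp [zero_rpow hp0, zero_rpow (inv_ne_zero hp0)]
  | insert a u ha ih =>
    simp_rw [sum_insert ha]
    exact (Lp_add_le T _ _ hp).trans (add_le_add_right ih _)

theorem rpow_sum_abs_sum_div_le {ι κ : Type*} (T : Finset ι) (u : Finset κ) (F : κ → ι → ℝ)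
    {p c : ℝ} (hp : 1 ≤ p) (hc : 0 ≤ c) :
    (∑ t ∈ T, |∑ j ∈ u, F j t| ^ p / c) ^ (1 / p) ≤
      ∑ j ∈ u, (∑ t ∈ T, |F j t| ^ p / c) ^ (1 / p) := by
  have hT : ∀ G : ι → ℝ, 0 ≤ ∑ t ∈ T, |G t| ^ p := fun G => sum_nonneg fun t _ => by positivity
  simp_rw [← sum_div, div_rpow (hT _) hc, ← sum_div]
  exact div_le_div_of_nonneg_right (rpow_sum_abs_sum_le T u F hp) (by positivity)

theorem sum_pow_mul_sqrt_le {ρ : ℝ} (h0 : 0 ≤ ρ) (h1 : ρ < 1) (n : ℕ) (a : ℕ → ℝ)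
    (ha : ∀ j ∈ range n, 0 ≤ a j) :
    ∑ j ∈ range n, ρ ^ j * √(a j) ≤ √((1 - ρ ^ 2)⁻¹) * √(∑ j ∈ range n, a j) := by
  refine (sum_mul_le_sqrt_mul_sqrt _ _ _).trans (mul_le_mul ?_ ?_ (sqrt_nonneg _) (sqrt_nonneg _))
  · refine sqrt_le_sqrt ?_
    simp_rw [← pow_mul, mul_comm _ 2, pow_mul, ← Nat.Ico_zero_eq_range]
    simpa [one_div] using geom_sum_Ico_le_of_lt_one (m := 0) (n := n) (sq_nonneg ρ)
      (by nlinarith)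
  · exact (sqrt_le_sqrt (sum_le_sum fun j hj => (sq_sqrt (ha j hj)).le))

theorem rpow_sum_abs_sum_dyadicBlock_le (N j : ℕ) (x : Fin N → ℝ) {s p : ℝ} (hp : 2 ≤ p) :
    (∑ t : Fin N, |∑ k ∈ dyadicBlock N j, x k * sineMode N k t| ^ p / (N + 1)) ^ (1 / p) ≤
      ((2 : ℝ) ^ (-(s + 1 / p - 1 / 2))) ^ j *
        √(max 1 (2 ^ (-(2 * s))) *
          ∑ k ∈ dyadicBlock N j, ((k : ℕ) + 1 : ℝ) ^ (2 * s) * x k ^ 2) := by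
  set B := dyadicBlock N j
  have hy : (0 : ℝ) < 2 ^ j := by positivity
  have hweight : ((2 : ℝ) ^ j) ^ (2 * s) * ∑ k ∈ B, x k ^ 2 ≤
      max 1 (2 ^ (-(2 * s))) * ∑ k ∈ B, ((k : ℕ) + 1 : ℝ) ^ (2 * s) * x k ^ 2 := by
    simp_rw [mul_sum, ← mul_assoc]
    refine sum_le_sum fun k hk => mul_le_mul_of_nonneg_right ?_ (sq_nonneg _)
    obtain ⟨hlo, hhi⟩ := pow_le_of_mem_dyadicBlock hk
    rw [pow_succ, mul_comm] at hhi
    exact rpow_le_max_one_mul_rpow hy (by exact_mod_cast hlo) (by exact_mod_cast hhi.le) _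
  have hρ : ((2 : ℝ) ^ (-(s + 1 / p - 1 / 2))) ^ j = ((2 : ℝ) ^ j) ^ (-(s + 1 / p - 1 / 2)) := by
    rw [← rpow_natCast, ← rpow_mul zero_le_two, mul_comm, rpow_mul zero_le_two, rpow_natCast]
  calc _ ≤ (#B : ℝ) ^ (1 / 2 - 1 / p) * √(∑ k ∈ B, x k ^ 2) :=
        rpow_sum_abs_sum_sineMode_le N B x hp
    _ ≤ ((2 : ℝ) ^ j) ^ (1 / 2 - 1 / p) * √(∑ k ∈ B, x k ^ 2) := by
        gcongr
        · linarith [one_div_le_one_div_of_le zero_lt_two hp]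
        · exact_mod_cast card_dyadicBlock_le N j
    _ = ((2 : ℝ) ^ (-(s + 1 / p - 1 / 2))) ^ j *
          √(((2 : ℝ) ^ j) ^ (2 * s) * ∑ k ∈ B, x k ^ 2) := by
        rw [hρ, sqrt_mul (rpow_nonneg hy.le _), sqrt_eq_rpow (_ ^ _), ← rpow_mul hy.le,
          ← mul_assoc, ← rpow_add hy]
        congr 2
        ring
    _ ≤ _ := by gcongr

theorem stmt_14 (s p : ℝ) (hs : s < 1 / 2) (hp2 : 2 ≤ p) (hp : p < (1 / 2 - s)⁻¹) :
    ∃ C : ℝ, 0 < C ∧ ∀ (N : ℕ) (x : Fin N → ℝ) (X : Fin N → ℝ),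
      (∀ t : Fin N, X t =
        ∑ k : Fin N, x k * Real.sin (((k : ℕ) + 1) * π * ((t : ℕ) + 1) / (N + 1))) →
      (∑ t : Fin N, |X t| ^ p / (N + 1)) ^ (1 / p) ≤
        C * (∑ k : Fin N, ((k : ℕ) + 1 : ℝ) ^ (2 * s) * (x k) ^ 2) ^ (1 / 2 : ℝ) := by
  have hε : 0 < s + 1 / p - 1 / 2 := by
    have := (lt_inv_comm₀ (by linarith) (by linarith)).1 hp
    rw [one_div p]
    linarith
  set ρ : ℝ := 2 ^ (-(s + 1 / p - 1 / 2))
  have hρ0 : 0 ≤ ρ := by positivity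
  have hρ1 : ρ < 1 := rpow_lt_one_of_one_lt_of_neg one_lt_two (by linarith)
  set cm : ℝ := max 1 (2 ^ (-(2 * s)))
  have hcm : 0 < cm := lt_max_of_lt_left one_pos
  have hρ2 : ρ ^ 2 < 1 := by nlinarith
  refine ⟨√cm * √((1 - ρ ^ 2)⁻¹), by positivity, fun N x X hX => ?_⟩
  set a : ℕ → ℝ := fun j => ∑ k ∈ dyadicBlock N j, ((k : ℕ) + 1 : ℝ) ^ (2 * s) * x k ^ 2
  have hX' : ∀ t, X t = ∑ j ∈ range N, ∑ k ∈ dyadicBlock N j, x k * sineMode N k t := fun t => by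
    rw [hX t, sum_range_sum_dyadicBlock]
    rfl
  calc (∑ t, |X t| ^ p / (N + 1)) ^ (1 / p)
      = (∑ t : Fin N, |∑ j ∈ range N, ∑ k ∈ dyadicBlock N j, x k * sineMode N k t| ^ p /
          (N + 1)) ^ (1 / p) := by simp_rw [hX']
    _ ≤ ∑ j ∈ range N, (∑ t : Fin N, |∑ k ∈ dyadicBlock N j, x k * sineMode N k t| ^ p /
          (N + 1)) ^ (1 / p) := rpow_sum_abs_sum_div_le _ _ _ (by linarith) (by positivity)
    _ ≤ ∑ j ∈ range N, ρ ^ j * √(cm * a j) :=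
        sum_le_sum fun j _ => rpow_sum_abs_sum_dyadicBlock_le N j x hp2
    _ = √cm * ∑ j ∈ range N, ρ ^ j * √(a j) := by
        simp_rw [mul_sum, sqrt_mul hcm.le, mul_left_comm]
    _ ≤ √cm * (√((1 - ρ ^ 2)⁻¹) * √(∑ j ∈ range N, a j)) := by
        gcongr
        exact sum_pow_mul_sqrt_le hρ0 hρ1 N a fun j _ => sum_nonneg fun k _ => by positivity
    _ = _ := by rw [sum_range_sum_dyadicBlock, ← sqrt_eq_rpow, mul_assoc]
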